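/- arXiv:2108.03709 — 6 statements merged into one kernel-verified Lean document; each statement's English description precedes it below -/
import Mathlib

section
/- Fix n ≥ 2, x_i ∈ [0,1), Δ > 0 with x_i + Δ ≤ 1, and the class mean x̄ of the full effort profile. Then the grade ratio m ↦ (x_i + Δ + max(m - x̄ - Δ/n, 0)) / (x_i + max(m - x̄, 0)) is nonincreasing in m on (0,1), provided x_i > 0. -/
/-!
Write t = m - x̄ and d = Δ/n. The ratio equals 1 + (Δ - min t⁺ d) / (x_i + t⁺): the numerator
Δ - min t⁺ d is nonnegative (as d ≤ Δ) and nonincreasing in t, while the denominator is positive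
and nondecreasing, so the quotient is nonincreasing.
-/

theorem Antitone.div_of_monotone {α 𝕜 : Type*} [Preorder α] [Field 𝕜] [LinearOrder 𝕜]
    [IsStrictOrderedRing 𝕜] {f g : α → 𝕜} (hf : Antitone f) (hg : Monotone g)
    (hf0 : ∀ x, 0 ≤ f x) (hg0 : ∀ x, 0 < g x) : Antitone fun x => f x / g x :=
  fun _ _ h => div_le_div₀ (hf0 _) (hf h) (hg0 _) (hg h)

theorem max_sub_max_sub_eq_min {α : Type*} [AddCommGroup α] [LinearOrder α]
    [IsOrderedAddMonoid α] {t d : α} (hd : 0 ≤ d) :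
    max t 0 - max (t - d) 0 = min (max t 0) d := by
  grind

theorem antitone_curved_grade_ratio {𝕜 : Type*} [Field 𝕜] [LinearOrder 𝕜]
    [IsStrictOrderedRing 𝕜] {x Δ d a : 𝕜} (hx : 0 < x) (hd : 0 ≤ d) (hdΔ : d ≤ Δ) :
    Antitone fun m => (x + Δ + max (m - a - d) 0) / (x + max (m - a) 0) := by
  have hden : ∀ m, 0 < x + max (m - a) 0 := fun m => by positivity
  have hsplit : ∀ m, (x + Δ + max (m - a - d) 0) / (x + max (m - a) 0) =
      1 + (Δ - min (max (m - a) 0) d) / (x + max (m - a) 0) := by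
    intro m
    rw [← max_sub_max_sub_eq_min hd, one_add_div (hden m).ne']
    ring_nf
  simp_rw [hsplit]
  refine Antitone.const_add (Antitone.div_of_monotone ?_ ?_ ?_ hden) 1
  · exact fun m₁ m₂ h => sub_le_sub_left (by gcongr) Δ
  · exact fun m₁ m₂ h => by gcongr
  · exact fun m => sub_nonneg.2 (min_le_right _ _ |>.trans hdΔ)

theorem stmt_3_general (n : ℕ) (xi Δ xbar : ℝ)
    (hxipos : 0 < xi) (hΔ : 0 < Δ) :
    AntitoneOn (fun m : ℝ =>
      (xi + Δ + max (m - xbar - Δ / n) 0) / (xi + max (m - xbar) 0))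
      (Set.Ioo (0:ℝ) 1) :=
  (antitone_curved_grade_ratio hxipos (by positivity)
    (div_nat_le_self_of_nonnneg hΔ.le n)).antitoneOn _

theorem stmt_3 (n : ℕ) (hn : 2 ≤ n) (xi Δ xbar : ℝ)
    (hxi : xi ∈ Set.Ico (0:ℝ) 1) (hxipos : 0 < xi) (hΔ : 0 < Δ)
    (hsum : xi + Δ ≤ 1) (hxbar : xbar ∈ Set.Icc (0:ℝ) 1) :
    AntitoneOn (fun m : ℝ =>
      (xi + Δ + max (m - xbar - Δ / n) 0) / (xi + max (m - xbar) 0))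
      (Set.Ioo (0:ℝ) 1) :=
  stmt_3_general n xi Δ xbar hxipos hΔ
end

section
/- Let n ≥ 2, m ∈ (0,1), α_i ∈ (0,1), and let G(x, s) = max(m + ((n-1)/n)(x - s), x) for x ∈ [0,1] and opponents' mean s ∈ [0,1]. Then for every x_i ∈ (α_i, 1] and every s ∈ [0,1], we have G(x_i,s)^(α_i) (1-x_i)^(1-α_i) < G(α_i,s)^(α_i) (1-α_i)^(1-α_i). -/
/-!
Write `A = G(α, s)` and `B = 1 - α`. Since `G(·, s)` grows with slope at most one,
`G(x, s) ≤ A + t` with `t = x - α`, so it suffices that shifting mass `t` from `B` to `A`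
lowers `A ^ α * B ^ (1 - α)`. By strict weighted AM–GM,
`((A + t) / A) ^ α * ((B - t) / B) ^ (1 - α) < 1 + t (α / A - 1)`, which is at most `1`
because `A ≥ α`.
-/

open Real

theorem add_rpow_mul_sub_rpow_lt {w A B t : ℝ} (hw₀ : 0 < w) (hw₁ : w < 1) (hA : 0 < A)
    (hB : 0 < B) (hwAB : w * B ≤ (1 - w) * A) (ht : 0 < t) (htB : t ≤ B) :
    (A + t) ^ w * (B - t) ^ (1 - w) < A ^ w * B ^ (1 - w) := by
  set p₁ := (A + t) / A
  set p₂ := (B - t) / B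
  have hp₂ : 0 ≤ p₂ := div_nonneg (by linarith) hB.le
  have hp₁₂ : p₁ ≠ p₂ := by
    have hp₂_lt : p₂ < 1 := (div_lt_one hB).2 (by linarith)
    have hp₁_gt : 1 < p₁ := (one_lt_div hA).2 (by linarith)
    linarith
  have amgm : p₁ ^ w * p₂ ^ (1 - w) < w * p₁ + (1 - w) * p₂ :=
    (geom_mean_lt_arith_mean2_weighted_iff_of_pos hw₀ (by linarith) (by positivity) hp₂
      (by ring)).2 hp₁₂
  have arith : w * p₁ + (1 - w) * p₂ ≤ 1 := by
    have hmean : w * p₁ + (1 - w) * p₂ = 1 + t * (w * B - (1 - w) * A) / (A * B) := by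
      simp only [p₁, p₂]; field_simp; ring
    rw [hmean, add_le_iff_nonpos_right]
    exact div_nonpos_of_nonpos_of_nonneg (mul_nonpos_of_nonneg_of_nonpos ht.le (by linarith))
      (by positivity)
  calc (A + t) ^ w * (B - t) ^ (1 - w)
      = A ^ w * B ^ (1 - w) * (p₁ ^ w * p₂ ^ (1 - w)) := by
        rw [div_rpow (by linarith) hA.le, div_rpow (by linarith) hB.le]
        field_simp
    _ < A ^ w * B ^ (1 - w) * 1 := by gcongr; exact amgm.trans_le arith
    _ = A ^ w * B ^ (1 - w) := mul_one _

theorem max_affine_le_add_sub {c m s x y : ℝ} (hc : c ≤ 1) (hyx : y ≤ x) :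
    max (m + c * (x - s)) x ≤ max (m + c * (y - s)) y + (x - y) := by
  have hslope : m + c * (x - s) ≤ m + c * (y - s) + (x - y) := by nlinarith
  refine max_le (hslope.trans ?_) ?_
  · gcongr; exact le_max_left _ _
  · linarith [le_max_right (m + c * (y - s)) y]

theorem natCast_sub_one_div_le_one (n : ℕ) : ((n : ℝ) - 1) / n ≤ 1 :=
  div_le_one_of_le₀ (by linarith) n.cast_nonneg

theorem stmt_4_general (n : ℕ) (m αi : ℝ)
    (hα : αi ∈ Set.Ioo (0:ℝ) 1)
    (G : ℝ → ℝ → ℝ)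
    (hG : ∀ x s, G x s = max (m + ((n : ℝ) - 1) / n * (x - s)) x) :
    ∀ xi ∈ Set.Ioc αi 1, ∀ s ∈ Set.Icc (0:ℝ) 1,
      (G xi s) ^ αi * (1 - xi) ^ (1 - αi) <
      (G αi s) ^ αi * (1 - αi) ^ (1 - αi) := by
  obtain ⟨hα₀, hα₁⟩ := hα
  rintro xi ⟨hαx, hx₁⟩ s -
  have hαG : αi ≤ G αi s := hG αi s ▸ le_max_right _ _
  have hGx : G xi s ≤ G αi s + (xi - αi) := by
    rw [hG, hG]; exact max_affine_le_add_sub (natCast_sub_one_div_le_one n) hαx.le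
  have hxG : 0 ≤ G xi s := by linarith [hG xi s ▸ le_max_right _ xi]
  calc G xi s ^ αi * (1 - xi) ^ (1 - αi)
      ≤ (G αi s + (xi - αi)) ^ αi * ((1 - αi) - (xi - αi)) ^ (1 - αi) := by
        rw [sub_sub_sub_cancel_right]; gcongr
    _ < G αi s ^ αi * (1 - αi) ^ (1 - αi) :=
        add_rpow_mul_sub_rpow_lt hα₀ hα₁ (by linarith) (by linarith)
          (by rw [mul_comm]; gcongr) (by linarith) (by linarith)

theorem stmt_4 (n : ℕ) (hn : 2 ≤ n) (m αi : ℝ)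
    (hm : m ∈ Set.Ioo (0:ℝ) 1) (hα : αi ∈ Set.Ioo (0:ℝ) 1)
    (G : ℝ → ℝ → ℝ)
    (hG : ∀ x s, G x s = max (m + ((n : ℝ) - 1) / n * (x - s)) x) :
    ∀ xi ∈ Set.Ioc αi 1, ∀ s ∈ Set.Icc (0:ℝ) 1,
      (G xi s) ^ αi * (1 - xi) ^ (1 - αi) <
      (G αi s) ^ αi * (1 - αi) ^ (1 - αi) :=
  stmt_4_general n m αi hα G hG
end

section
/- For every integer n ≥ 2 and every z ∈ (0,1), (n - z)·(1-z)^((1-z)/z) > (n-1)/n. -/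
/-!
Write `z = 1 - s²` with `0 < s < 1`. Applying `log x ≥ 1 - 1/x` at `x = s` rather than at
`x = s²` gives the sharper estimate `log (s²) ≥ 2 (1 - 1/s)`, under which the exponent
`log (1 - z) · (1 - z) / z` is at least `2 / (1 + s) - 2`; with `exp (x - 1) ≥ x` this yields
`(1 - z) ^ ((1 - z) / z) ≥ 2 / ((1 + s) e)`. The claim then reduces to the polynomial inequality
`2 n (n - 1 + s²) > e (n - 1) (1 + s)`, which already holds with `e` replaced by `3`.
-/

open Real

theorem two_div_one_add_sub_two_le_log_sq_mul {s : ℝ} (hs0 : 0 < s) (hs1 : s < 1) :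
    2 / (1 + s) - 2 ≤ log (s ^ 2) * (s ^ 2 / (1 - s ^ 2)) := by
  have hlog : 2 * (1 - s⁻¹) ≤ log (s ^ 2) := by
    rw [log_pow]
    push_cast
    linarith [one_sub_inv_le_log_of_pos hs0]
  have hratio : 0 ≤ s ^ 2 / (1 - s ^ 2) := div_nonneg (by positivity) (by nlinarith)
  calc 2 / (1 + s) - 2 = 2 * (1 - s⁻¹) * (s ^ 2 / (1 - s ^ 2)) := by
        have h1s : 1 - s ≠ 0 := by linarith
        rw [show 1 - s ^ 2 = (1 - s) * (1 + s) by ring]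
        field_simp
        ring
    _ ≤ log (s ^ 2) * (s ^ 2 / (1 - s ^ 2)) := mul_le_mul_of_nonneg_right hlog hratio

theorem two_div_one_add_div_exp_one_le_sq_rpow {s : ℝ} (hs0 : 0 < s) (hs1 : s < 1) :
    2 / (1 + s) / exp 1 ≤ (s ^ 2) ^ (s ^ 2 / (1 - s ^ 2)) := by
  set x := 2 / (1 + s)
  calc x / exp 1 ≤ exp (x - 1) / exp 1 := by
        gcongr
        linarith [add_one_le_exp (x - 1)]
    _ = exp (x - 2) := by rw [← exp_sub]; ring_nf
    _ ≤ exp (log (s ^ 2) * (s ^ 2 / (1 - s ^ 2))) :=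
        exp_le_exp.2 (two_div_one_add_sub_two_le_log_sq_mul hs0 hs1)
    _ = (s ^ 2) ^ (s ^ 2 / (1 - s ^ 2)) := (rpow_def_of_pos (by positivity) _).symm

-- `8 n (rhs - lhs) = (4 n s - 3 (n - 1))² + (n - 1) ((n - 2) (16 n - 1) + 7)`
theorem three_mul_sub_one_mul_one_add_lt {n : ℝ} (hn : 2 ≤ n) (s : ℝ) :
    3 * (n - 1) * (1 + s) < 2 * n * (n - 1 + s ^ 2) := by
  have h8n : 0 < 8 * n * (2 * n * (n - 1 + s ^ 2) - 3 * (n - 1) * (1 + s)) := by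
    nlinarith [sq_nonneg (4 * n * s - 3 * (n - 1)),
      mul_nonneg (by linarith : (0 : ℝ) ≤ n - 1)
        (mul_nonneg (by linarith : (0 : ℝ) ≤ n - 2) (by linarith : (0 : ℝ) ≤ 16 * n - 1))]
  linarith [(mul_pos_iff_of_pos_left (by positivity : (0 : ℝ) < 8 * n)).1 h8n]

theorem sub_one_div_lt_mul_two_div_one_add_div_exp_one {n s : ℝ} (hn : 2 ≤ n) (hs : 0 ≤ s) :
    (n - 1) / n < (n - 1 + s ^ 2) * (2 / (1 + s) / exp 1) := by
  rw [show (n - 1 + s ^ 2) * (2 / (1 + s) / exp 1) = 2 * (n - 1 + s ^ 2) / ((1 + s) * exp 1) by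
      field_simp, div_lt_div_iff₀ (by positivity) (by positivity)]
  nlinarith [three_mul_sub_one_mul_one_add_lt hn s, exp_one_lt_three,
    mul_pos (by linarith : (0 : ℝ) < n - 1) (by linarith : (0 : ℝ) < 1 + s)]

theorem stmt_7 (n : ℕ) (hn : 2 ≤ n) (z : ℝ) (hz : z ∈ Set.Ioo (0:ℝ) 1) :
    ((n : ℝ) - z) * (1 - z) ^ ((1 - z) / z) > ((n : ℝ) - 1) / n := by
  obtain ⟨hz0, hz1⟩ := hz
  obtain ⟨s, hs0, hs1, rfl⟩ : ∃ s : ℝ, 0 < s ∧ s < 1 ∧ z = 1 - s ^ 2 :=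
    ⟨√(1 - z), sqrt_pos.2 (by linarith), (sqrt_lt' one_pos).2 (by linarith),
      by rw [sq_sqrt (by linarith)]; ring⟩
  have hn' : (2 : ℝ) ≤ n := by exact_mod_cast hn
  rw [sub_sub_cancel, gt_iff_lt]
  calc ((n : ℝ) - 1) / n < (n - 1 + s ^ 2) * (2 / (1 + s) / exp 1) :=
        sub_one_div_lt_mul_two_div_one_add_div_exp_one hn' hs0.le
    _ ≤ (n - (1 - s ^ 2)) * (s ^ 2) ^ (s ^ 2 / (1 - s ^ 2)) := by
        rw [← sub_add]
        exact mul_le_mul_of_nonneg_left (two_div_one_add_div_exp_one_le_sq_rpow hs0 hs1)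
          (by nlinarith)
end

section
/- The function g_n(z) := n z + (n - z) log(1 - z) satisfies g_n(z) ≤ 0 for all z ∈ [0,1) and all integers n ≥ 2. -/
/-!
Put `x = z / (2 - z)`, so that `(1 + x) / (1 - x) = 1 / (1 - z)`. The series
`log (1 + x) - log (1 - x) = 2 ∑ x ^ (2k+1) / (2k+1)` has nonnegative terms, so its first term gives
`-log (1 - z) ≥ 2z / (2 - z)`. Substituting this bound leaves `-(n - 2) z² / (2 - z) ≤ 0`.
-/

open Real

lemma Real.log_one_sub_le_neg_two_mul_div {z : ℝ} (h0 : 0 ≤ z) (h1 : z < 1) :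
    log (1 - z) ≤ -(2 * z / (2 - z)) := by
  set x := z / (2 - z) with hx_def
  have h2z : 0 < 2 - z := by linarith
  have hx0 : 0 ≤ x := div_nonneg h0 h2z.le
  have hx1 : x < 1 := (div_lt_one h2z).2 (by linarith)
  have hsum := hasSum_log_sub_log_of_abs_lt_one (abs_lt.2 ⟨by linarith, hx1⟩)
  have hfirst : 2 * x ≤ log (1 + x) - log (1 - x) := by
    simpa using le_hasSum hsum 0 fun k _ => by positivity
  have hfactor : 1 - x = (1 - z) * (1 + x) := by
    rw [hx_def]; field_simp; ring
  have hlog : log (1 - x) = log (1 - z) + log (1 + x) := by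
    rw [hfactor, log_mul (by linarith) (by linarith)]
  rw [mul_div_assoc]
  linarith

lemma mul_add_sub_mul_log_one_sub_nonpos {n z : ℝ} (hn : 2 ≤ n) (h0 : 0 ≤ z) (h1 : z < 1) :
    n * z + (n - z) * log (1 - z) ≤ 0 := by
  have h2z : 0 < 2 - z := by linarith
  have hbound : (n - z) * log (1 - z) ≤ (n - z) * -(2 * z / (2 - z)) :=
    mul_le_mul_of_nonneg_left (log_one_sub_le_neg_two_mul_div h0 h1) (by linarith)
  have hrational : n * z + (n - z) * -(2 * z / (2 - z)) = -((n - 2) * z ^ 2 / (2 - z)) := by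
    field_simp; ring
  have : 0 ≤ (n - 2) * z ^ 2 / (2 - z) := by
    have := sub_nonneg.2 hn
    positivity
  linarith

theorem stmt_8 (n : ℕ) (hn : 2 ≤ n) (z : ℝ) (hz : z ∈ Set.Ico (0:ℝ) 1) :
    (n : ℝ) * z + ((n : ℝ) - z) * Real.log (1 - z) ≤ 0 :=
  mul_add_sub_mul_log_one_sub_nonpos (by exact_mod_cast hn) hz.1 hz.2
end

section
/- Fix n ≥ 2, m ∈ (0,1), α ∈ (0,1), and define φ(z) = (m + ((n-1)/n)(1 - z))^α (1 + n m/(n-1) - z)^(1-α) - 1. Then φ is strictly decreasing on the interval [(n m - α)/(n-1), n m/(n-1) - α/(n-α)] and has exactly one zero there, provided φ is nonnegative at the left endpoint and nonpositive at the right endpoint (which always holds). -/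
/-!
On the interval `[L, R]` of the statement, both bases of `φ` are positive affine functions with
negative slope, so `φ` is a strictly decreasing product of powers, and a continuous one: the
intermediate value theorem gives exactly one zero once the signs at the endpoints are known. At both endpoints the
bases are ratios against a weighted arithmetic mean with weights `α, 1 - α`: at `L` they are
`w / n` and `w / (n - 1)` with `w = α n + (1 - α) (n - 1)`, at `R` they are `(n - 1) / w'` and
`n / w'` with `w' = α (n - 1) + (1 - α) n`. The weighted AM-GM inequality therefore gives
`φ L ≥ 0` and `φ R ≤ 0`.
-/

open Set

theorem existsUnique_mem_Icc_eq_of_strictAntiOn {α δ : Type*} [ConditionallyCompleteLinearOrder α]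
    [TopologicalSpace α] [OrderTopology α] [DenselyOrdered α] [LinearOrder δ]
    [TopologicalSpace δ] [OrderClosedTopology δ] {f : α → δ} {a b : α} {c : δ} (hab : a ≤ b)
    (hf : ContinuousOn f (Icc a b)) (hanti : StrictAntiOn f (Icc a b)) (hfa : c ≤ f a)
    (hfb : f b ≤ c) : ∃! z, z ∈ Icc a b ∧ f z = c := by
  obtain ⟨z, hz, hfz⟩ := intermediate_value_Icc' hab hf ⟨hfb, hfa⟩
  exact ⟨z, ⟨hz, hfz⟩, fun y ⟨hy, hfy⟩ ↦ hanti.injOn hy hz (hfy.trans hfz.symm)⟩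

theorem StrictAntiOn.rpow_mul_rpow {f g : ℝ → ℝ} {s : Set ℝ} {p q : ℝ} (hf : StrictAntiOn f s)
    (hg : StrictAntiOn g s) (hf₀ : ∀ z ∈ s, 0 ≤ f z) (hg₀ : ∀ z ∈ s, 0 ≤ g z) (hp : 0 < p)
    (hq : 0 < q) : StrictAntiOn (fun z ↦ f z ^ p * g z ^ q) s := fun _ hx y hy hxy ↦
  mul_lt_mul'' (Real.rpow_lt_rpow (hf₀ y hy) (hf hx hy hxy) hp)
    (Real.rpow_lt_rpow (hg₀ y hy) (hg hx hy hxy) hq)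
    (Real.rpow_nonneg (hf₀ y hy) p) (Real.rpow_nonneg (hg₀ y hy) q)

section WeightedMean

variable {a x y : ℝ}

theorem div_rpow_mul_div_rpow_le_one (ha₀ : 0 ≤ a) (ha₁ : a ≤ 1) (hx : 0 ≤ x) (hy : 0 ≤ y)
    (hw : 0 < a * x + (1 - a) * y) :
    (x / (a * x + (1 - a) * y)) ^ a * (y / (a * x + (1 - a) * y)) ^ (1 - a) ≤ 1 :=
  calc (x / (a * x + (1 - a) * y)) ^ a * (y / (a * x + (1 - a) * y)) ^ (1 - a)
      ≤ a * (x / (a * x + (1 - a) * y)) + (1 - a) * (y / (a * x + (1 - a) * y)) :=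
        Real.geom_mean_le_arith_mean2_weighted ha₀ (by linarith) (by positivity) (by positivity)
          (by ring)
    _ = 1 := by rw [mul_div_assoc', mul_div_assoc', ← add_div, div_self hw.ne']

theorem one_le_div_rpow_mul_div_rpow (ha₀ : 0 ≤ a) (ha₁ : a ≤ 1) (hx : 0 < x) (hy : 0 < y) :
    1 ≤ ((a * x + (1 - a) * y) / x) ^ a * ((a * x + (1 - a) * y) / y) ^ (1 - a) := by
  have hw : 0 < a * x + (1 - a) * y := by
    have := lt_min hx hy
    nlinarith [mul_le_mul_of_nonneg_left (min_le_left x y) ha₀,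
      mul_le_mul_of_nonneg_left (min_le_right x y) (sub_nonneg.2 ha₁)]
  have hprod : 0 < (x / (a * x + (1 - a) * y)) ^ a * (y / (a * x + (1 - a) * y)) ^ (1 - a) := by
    positivity
  rw [← inv_div, ← inv_div (a := y), Real.inv_rpow (by positivity), Real.inv_rpow (by positivity),
    ← mul_inv]
  exact one_le_inv₀ hprod |>.mpr (div_rpow_mul_div_rpow_le_one ha₀ ha₁ hx.le hy.le hw)

end WeightedMean

/-- The function `φ` of the statement, for a real number of players `N`. -/
noncomputable def payoffGap (N m a z : ℝ) : ℝ :=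
  (m + (N - 1) / N * (1 - z)) ^ a * (1 + N * m / (N - 1) - z) ^ (1 - a) - 1

section PayoffGap

variable {N m a : ℝ}

theorem continuous_payoffGap (ha₀ : 0 ≤ a) (ha₁ : a ≤ 1) : Continuous (payoffGap N m a) := by
  unfold payoffGap
  have : 0 ≤ 1 - a := by linarith
  fun_prop (disch := simp [*])

theorem payoffGap_strictAntiOn (hN : 1 < N) (ha₀ : 0 < a) (ha₁ : a < 1) :
    StrictAntiOn (payoffGap N m a) (Iic (N * m / (N - 1) - a / (N - a))) := by
  set R := N * m / (N - 1) - a / (N - a)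
  have hN₀ : 0 < N := by linarith
  have hN₁ : 0 < N - 1 := by linarith
  have hNa : 0 < N - a := by linarith
  -- Rewritten around `R`, the bases are visibly positive on `Iic R`.
  have hA : ∀ z, m + (N - 1) / N * (1 - z) = (N - 1) / (N - a) + (N - 1) / N * (R - z) := by
    intro z; simp only [R]; field_simp; ring
  have hB : ∀ z, 1 + N * m / (N - 1) - z = N / (N - a) + (R - z) := by
    intro z; simp only [R]; field_simp; ring
  have hbases := StrictAntiOn.rpow_mul_rpow (s := Iic R)
    (f := fun z ↦ m + (N - 1) / N * (1 - z)) (g := fun z ↦ 1 + N * m / (N - 1) - z)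
    (fun _ _ _ _ hxy ↦ by dsimp only; gcongr) (fun _ _ _ _ hxy ↦ by dsimp only; gcongr)
    (fun z hz ↦ by rw [hA]; have : 0 ≤ R - z := sub_nonneg.2 hz; positivity)
    (fun z hz ↦ by rw [hB]; have : 0 ≤ R - z := sub_nonneg.2 hz; positivity)
    ha₀ (sub_pos.2 ha₁)
  exact fun x hx y hy hxy ↦ sub_lt_sub_right (hbases hx hy hxy) 1

theorem payoffGap_left_nonneg (hN : 1 < N) (ha₀ : 0 ≤ a) (ha₁ : a ≤ 1) :
    0 ≤ payoffGap N m a ((N * m - a) / (N - 1)) := by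
  have hN₁ : N - 1 ≠ 0 := by linarith
  have hN₀ : N ≠ 0 := by linarith
  have hA : m + (N - 1) / N * (1 - (N * m - a) / (N - 1)) = (a * N + (1 - a) * (N - 1)) / N := by
    field_simp; ring
  have hB : 1 + N * m / (N - 1) - (N * m - a) / (N - 1)
      = (a * N + (1 - a) * (N - 1)) / (N - 1) := by
    field_simp; ring
  rw [payoffGap, hA, hB, sub_nonneg]
  exact one_le_div_rpow_mul_div_rpow ha₀ ha₁ (by linarith) (by linarith)

theorem payoffGap_right_nonpos (hN : 1 < N) (ha₀ : 0 ≤ a) (ha₁ : a ≤ 1) :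
    payoffGap N m a (N * m / (N - 1) - a / (N - a)) ≤ 0 := by
  have hN₁ : N - 1 ≠ 0 := by linarith
  have hN₀ : N ≠ 0 := by linarith
  have hw : a * (N - 1) + (1 - a) * N = N - a := by ring
  have hNa : N - a ≠ 0 := by linarith
  have hA : m + (N - 1) / N * (1 - (N * m / (N - 1) - a / (N - a)))
      = (N - 1) / (a * (N - 1) + (1 - a) * N) := by
    rw [hw]; field_simp; ring
  have hB : 1 + N * m / (N - 1) - (N * m / (N - 1) - a / (N - a))
      = N / (a * (N - 1) + (1 - a) * N) := by
    rw [hw]; field_simp; ring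
  rw [payoffGap, hA, hB, sub_nonpos]
  exact div_rpow_mul_div_rpow_le_one ha₀ ha₁ (by linarith) (by linarith) (by linarith)

end PayoffGap

theorem jump_interval_left_le_right {N m a : ℝ} (hN : 1 < N) (ha₀ : 0 ≤ a) (ha₁ : a ≤ 1) :
    (N * m - a) / (N - 1) ≤ N * m / (N - 1) - a / (N - a) := by
  have hN₁ : 0 < N - 1 := by linarith
  have hNa : 0 < N - a := by linarith
  have hdiff : N * m / (N - 1) - a / (N - a) - (N * m - a) / (N - 1)
      = a * (1 - a) / ((N - 1) * (N - a)) := by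
    field_simp; ring
  have : 0 ≤ a * (1 - a) / ((N - 1) * (N - a)) := by
    have : 0 ≤ 1 - a := by linarith
    positivity
  linarith

theorem stmt_12_general (n : ℕ) (hn : 2 ≤ n) (m α : ℝ)
    (hα : α ∈ Set.Ioo (0:ℝ) 1)
    (φ : ℝ → ℝ)
    (hφ : ∀ z, φ z = (m + ((n : ℝ) - 1) / n * (1 - z)) ^ α *
      (1 + (n : ℝ) * m / ((n : ℝ) - 1) - z) ^ (1 - α) - 1) :
    StrictAntiOn φ
      (Set.Icc (((n : ℝ) * m - α) / ((n : ℝ) - 1))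
        ((n : ℝ) * m / ((n : ℝ) - 1) - α / ((n : ℝ) - α))) ∧
    0 ≤ φ (((n : ℝ) * m - α) / ((n : ℝ) - 1)) ∧
    φ ((n : ℝ) * m / ((n : ℝ) - 1) - α / ((n : ℝ) - α)) ≤ 0 ∧
    (∃! z, z ∈ Set.Icc (((n : ℝ) * m - α) / ((n : ℝ) - 1))
        ((n : ℝ) * m / ((n : ℝ) - 1) - α / ((n : ℝ) - α)) ∧ φ z = 0) := by
  obtain ⟨hα₀, hα₁⟩ := hα
  have hN : (1 : ℝ) < n := by exact_mod_cast hn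
  obtain rfl : φ = payoffGap n m α := funext hφ
  have hanti : StrictAntiOn (payoffGap n m α)
      (Icc ((n * m - α) / (n - 1)) (n * m / (n - 1) - α / (n - α))) :=
    (payoffGap_strictAntiOn hN hα₀ hα₁).mono Icc_subset_Iic_self
  have hleft := payoffGap_left_nonneg (m := m) hN hα₀.le hα₁.le
  have hright := payoffGap_right_nonpos (m := m) hN hα₀.le hα₁.le
  exact ⟨hanti, hleft, hright, existsUnique_mem_Icc_eq_of_strictAntiOn
    (jump_interval_left_le_right hN hα₀.le hα₁.le)
    (continuous_payoffGap hα₀.le hα₁.le).continuousOn hanti hleft hright⟩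

theorem stmt_12 (n : ℕ) (hn : 2 ≤ n) (m α : ℝ)
    (hm : m ∈ Set.Ioo (0:ℝ) 1) (hα : α ∈ Set.Ioo (0:ℝ) 1)
    (φ : ℝ → ℝ)
    (hφ : ∀ z, φ z = (m + ((n : ℝ) - 1) / n * (1 - z)) ^ α *
      (1 + (n : ℝ) * m / ((n : ℝ) - 1) - z) ^ (1 - α) - 1) :
    StrictAntiOn φ
      (Set.Icc (((n : ℝ) * m - α) / ((n : ℝ) - 1))
        ((n : ℝ) * m / ((n : ℝ) - 1) - α / ((n : ℝ) - α))) ∧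
    0 ≤ φ (((n : ℝ) * m - α) / ((n : ℝ) - 1)) ∧
    φ ((n : ℝ) * m / ((n : ℝ) - 1) - α / ((n : ℝ) - α)) ≤ 0 ∧
    (∃! z, z ∈ Set.Icc (((n : ℝ) * m - α) / ((n : ℝ) - 1))
        ((n : ℝ) * m / ((n : ℝ) - 1) - α / ((n : ℝ) - α)) ∧ φ z = 0) :=
  stmt_12_general n hn m α hα φ hφ
end

section
/- Let n ≥ 2, m ∈ (0,1), α_1,...,α_n ∈ (0,1), S := (∑_i ((n-1)α_i - (1-α_i) n m)/(n-α_i)) / (1 - ∑_i (1-α_i)/(n-α_i)), assuming the denominator is nonzero. Then with S_2 := ∑_i 1/(n-α_i) and α̂ := n(1 - 1/S_2), the average x̄ := S/n satisfies x̄ = 1 - (n m/(n-1))(1/α̂ - 1). -/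
/-!
Write `S₂ = ∑ᵢ 1/(n - αᵢ)`. Since `(a αᵢ + b)/(n - αᵢ) = (a n + b)/(n - αᵢ) - a`, every sum in
the statement is affine in `S₂`: the denominator `1 - ∑ᵢ (1 - αᵢ)/(n - αᵢ)` equals `(n - 1)(S₂ - 1)`
and the numerator equals `(n - 1 + n m) n (S₂ - 1) - n m S₂`. Both sides of the claimed identity
are then rational functions of `S₂` alone, and they agree.
-/

open Finset

theorem sum_affine_div_sub {ι : Type*} [Fintype ι] (α : ι → ℝ) (a b x : ℝ)
    (hα : ∀ i, x - α i ≠ 0) :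
    ∑ i, (a * α i + b) / (x - α i) = (a * x + b) * ∑ i, 1 / (x - α i) - a * Fintype.card ι := by
  have h : ∀ i, (a * α i + b) / (x - α i) = (a * x + b) * (1 / (x - α i)) - a := fun i => by
    field_simp [hα i]
    ring
  simp only [h, sum_sub_distrib, ← mul_sum, sum_const, card_univ, nsmul_eq_mul, mul_comm]

theorem stmt_16_general (n : ℕ) (hn : 2 ≤ n) (m : ℝ)
    (α : Fin n → ℝ) (hα : ∀ i, α i ∈ Set.Ioo (0:ℝ) 1)
    (hden : 1 - ∑ i, (1 - α i) / ((n : ℝ) - α i) ≠ 0) :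
    (∑ i, (((n : ℝ) - 1) * α i - (1 - α i) * (n * m)) / ((n : ℝ) - α i)) /
        (1 - ∑ i, (1 - α i) / ((n : ℝ) - α i)) / n =
      1 - ((n : ℝ) * m / ((n : ℝ) - 1)) *
        (1 / ((n : ℝ) * (1 - (∑ i, (1 : ℝ) / ((n : ℝ) - α i))⁻¹)) - 1) := by
  have hn2 : (2 : ℝ) ≤ n := by exact_mod_cast hn
  have hpos : ∀ i, 0 < (n : ℝ) - α i := fun i => by linarith [(hα i).2]
  have hne : ∀ i, (n : ℝ) - α i ≠ 0 := fun i => (hpos i).ne'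
  set S₂ := ∑ i, (1 : ℝ) / ((n : ℝ) - α i)
  have hS₂ : 0 < S₂ :=
    sum_pos (fun i _ => one_div_pos.mpr (hpos i)) (univ_nonempty_iff.mpr ⟨⟨0, by omega⟩⟩)
  have hden_eq : 1 - ∑ i, (1 - α i) / ((n : ℝ) - α i) = (n - 1) * (S₂ - 1) := by
    rw [sum_congr rfl fun i _ => show _ = (-1 * α i + 1) / ((n : ℝ) - α i) by ring,
      sum_affine_div_sub α _ _ _ hne, Fintype.card_fin]
    ring
  have hnum : ∑ i, (((n : ℝ) - 1) * α i - (1 - α i) * (n * m)) / ((n : ℝ) - α i) =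
      (n - 1 + n * m) * n * (S₂ - 1) - n * m * S₂ := by
    rw [sum_congr rfl fun i _ =>
        show _ = ((n - 1 + n * m) * α i + -(n * m)) / ((n : ℝ) - α i) by ring,
      sum_affine_div_sub α _ _ _ hne, Fintype.card_fin]
    ring
  have hS₂1 : S₂ - 1 ≠ 0 := right_ne_zero_of_mul (hden_eq ▸ hden)
  have hn1 : (n : ℝ) - 1 ≠ 0 := by linarith
  have hα_hat : (n : ℝ) * (1 - S₂⁻¹) = n * (S₂ - 1) / S₂ := by field_simp
  rw [hnum, hden_eq, hα_hat]
  field_simp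
  ring

theorem stmt_16 (n : ℕ) (hn : 2 ≤ n) (m : ℝ) (hm : m ∈ Set.Ioo (0:ℝ) 1)
    (α : Fin n → ℝ) (hα : ∀ i, α i ∈ Set.Ioo (0:ℝ) 1)
    (hden : 1 - ∑ i, (1 - α i) / ((n : ℝ) - α i) ≠ 0) :
    (∑ i, (((n : ℝ) - 1) * α i - (1 - α i) * (n * m)) / ((n : ℝ) - α i)) /
        (1 - ∑ i, (1 - α i) / ((n : ℝ) - α i)) / n =
      1 - ((n : ℝ) * m / ((n : ℝ) - 1)) *
        (1 / ((n : ℝ) * (1 - (∑ i, (1 : ℝ) / ((n : ℝ) - α i))⁻¹)) - 1) :=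
  stmt_16_general n hn m α hα hden
end
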